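/- arXiv:2001.11545 — 5 statements merged into one kernel-verified Lean document; each statement's English description precedes it below -/
import Mathlib

section
/- For every α ∈ [0,1] and every t ≥ 0, under the Stavskaya process with parameter α started from the all-ones configuration, the configuration at time t has the same law as the random configuration (𝟙{there is an open path from level 0 to (i,t)})_{i∈ℤ} built from the i.i.d. Bernoulli field (ω_{j,s})_{j∈ℤ, s≥1} with P(ω_{j,s}=1)=1−α. -/
open MeasureTheory Filter

noncomputable section

/-- The state of the Stavskaya process at time `t`, started from the all-ones
configuration, driven by the noise field `ξ : ℤ × ℕ → Bool` (`ξ (i, s) = false` means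
vertex `i` is killed at step `s`; this happens with probability `α`, i.i.d.). -/
def stavState : ℕ → ((ℤ × ℕ) → Bool) → ℤ → Bool
  | 0, _, _ => true
  | t + 1, ω, i => (stavState t ω i || stavState t ω (i + 1)) && ω (i, t + 1)

/-- `P` is the law of an i.i.d. field `(ω_{j,s})_{(j,s) ∈ ℤ × ℕ}` of `{0,1}`-valued random
variables with `P(ω_{j,s} = 1) = 1 - α`. -/
def IsBernoulliNoise (α : ℝ) (P : Measure ((ℤ × ℕ) → Bool)) : Prop :=
  IsProbabilityMeasure P ∧
    ∀ (s : Finset (ℤ × ℕ)) (b : (ℤ × ℕ) → Bool),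
      P {ω | ∀ v ∈ s, ω v = b v} =
        ∏ v ∈ s, ENNReal.ofReal (if b v then 1 - α else α)

/-- The law at time `t` of the Stavskaya process with parameter `α` started from the
all-ones configuration (`δ₁ Stav^t`), the driving noise having law `P`. -/
def stavLaw (P : Measure ((ℤ × ℕ) → Bool)) (t : ℕ) : Measure (ℤ → Bool) :=
  P.map (stavState t)

/-- There is an open path from level `0` to `(i, t)` in the oriented percolation picture
built from the field `ω`: a sequence `(j_0,0), (j_1,1), …, (j_t,t)` with `j_t = i`,
`j_{s+1} ∈ {j_s, j_s − 1}` and `ω (j_s, s) = 1` for all `1 ≤ s ≤ t`. -/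
def OpenPath (ω : (ℤ × ℕ) → Bool) (i : ℤ) (t : ℕ) : Prop :=
  ∃ j : ℕ → ℤ, j t = i ∧ (∀ s < t, j (s + 1) = j s ∨ j (s + 1) = j s - 1) ∧
    ∀ s, 1 ≤ s → s ≤ t → ω (j s, s) = true

open Classical in
/-- The percolation configuration at time `t`: vertex `i` is occupied iff there is an
open path from level `0` to `(i, t)`. -/
def percConfig (t : ℕ) (ω : (ℤ × ℕ) → Bool) : ℤ → Bool :=
  fun i => if OpenPath ω i t then true else false

lemma openPath_zero (ω : (ℤ × ℕ) → Bool) (i : ℤ) : OpenPath ω i 0 :=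
  ⟨fun _ => i, rfl, fun s hs => absurd hs (Nat.not_lt_zero s),
    fun s h1 h0 => absurd (h1.trans h0) (by omega)⟩

lemma openPath_succ (ω : (ℤ × ℕ) → Bool) (i : ℤ) (t : ℕ) :
    OpenPath ω i (t + 1) ↔ (OpenPath ω i t ∨ OpenPath ω (i + 1) t) ∧ ω (i, t + 1) = true := by
  constructor
  · rintro ⟨j, hjt, hstep, hopen⟩
    refine ⟨?_, by rw [← hjt]; exact hopen (t + 1) (by omega) le_rfl⟩
    have hpath : OpenPath ω (j t) t :=
      ⟨j, rfl, fun s hs => hstep s (by omega), fun s h1 h2 => hopen s h1 (by omega)⟩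
    rcases hstep t (by omega) with h | h
    · left; have : j t = i := by omega
      rwa [this] at hpath
    · right; have : j t = i + 1 := by omega
      rwa [this] at hpath
  · rintro ⟨hp, hω⟩
    obtain ⟨i', hi', j, hjt, hstep, hopen⟩ :
        ∃ i', (i' = i ∨ i' = i + 1) ∧ ∃ j : ℕ → ℤ, j t = i' ∧
          (∀ s < t, j (s + 1) = j s ∨ j (s + 1) = j s - 1) ∧
          ∀ s, 1 ≤ s → s ≤ t → ω (j s, s) = true := by
      rcases hp with h | h
      · exact ⟨i, Or.inl rfl, h⟩
      · exact ⟨i + 1, Or.inr rfl, h⟩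
    refine ⟨fun s => if s = t + 1 then i else j s, by simp, ?_, ?_⟩
    · intro s hs
      rcases Nat.lt_succ_iff_lt_or_eq.mp hs with hlt | heq
      · simp only [if_neg (by omega : ¬ s + 1 = t + 1), if_neg (by omega : ¬ s = t + 1)]
        exact hstep s hlt
      · simp only [if_pos (by omega : s + 1 = t + 1), if_neg (by omega : ¬ s = t + 1)]
        rw [heq]
        rcases hi' with h | h <;> omega
    · intro s h1 h2
      by_cases hst : s = t + 1
      · subst hst; simpa using hω
      · simp only [if_neg hst]
        exact hopen s h1 (by omega)

lemma stavState_eq (t : ℕ) (ω : (ℤ × ℕ) → Bool) : stavState t ω = percConfig t ω := by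
  induction t with
  | zero => funext i; simp [stavState, percConfig, openPath_zero]
  | succ t ih =>
    funext i
    show ((stavState t ω i || stavState t ω (i + 1)) && ω (i, t + 1)) = percConfig (t + 1) ω i
    rw [ih]
    simp only [percConfig]
    by_cases h : OpenPath ω i (t + 1)
    · rw [if_pos h]
      obtain ⟨hor, hω⟩ := (openPath_succ ω i t).mp h
      rcases hor with h' | h' <;> simp [h', hω]
    · rw [if_neg h]
      rw [openPath_succ] at h
      by_cases h1 : OpenPath ω i t <;> by_cases h2 : OpenPath ω (i + 1) t <;>
        simp_all [Bool.not_eq_true]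

lemma bernoulli_unique (α : ℝ) {P P' : Measure ((ℤ × ℕ) → Bool)}
    (hP : IsBernoulliNoise α P) (hP' : IsBernoulliNoise α P') : P = P' := by
  obtain ⟨hP1, hP2⟩ := hP
  obtain ⟨hP'1, hP'2⟩ := hP'
  haveI := hP1; haveI := hP'1
  set C : Set (Set ((ℤ × ℕ) → Bool)) :=
    {S | ∃ (s : Finset (ℤ × ℕ)) (b : (ℤ × ℕ) → Bool), S = {ω | ∀ v ∈ s, ω v = b v}} with hC
  have hgen : (inferInstance : MeasurableSpace ((ℤ × ℕ) → Bool)) =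
      MeasurableSpace.generateFrom C := by
    apply le_antisymm
    · refine iSup_le fun v => ?_
      rw [← measurable_iff_comap_le]
      intro S _
      have hS : (fun ω : (ℤ × ℕ) → Bool => ω v) ⁻¹' S =
          ⋃ b ∈ S, {ω : (ℤ × ℕ) → Bool | ω v = b} := by
        ext ω
        simp only [Set.mem_preimage, Set.mem_iUnion, Set.mem_setOf_eq]
        exact ⟨fun h => ⟨ω v, h, rfl⟩, fun ⟨b, hb, hb'⟩ => hb' ▸ hb⟩
      rw [hS]
      exact MeasurableSet.biUnion S.to_countable fun b _ =>
        MeasurableSpace.measurableSet_generateFrom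
          ⟨{v}, fun _ => b, by ext ω; simp⟩
    · refine MeasurableSpace.generateFrom_le ?_
      rintro S ⟨s, b, rfl⟩
      have : {ω : (ℤ × ℕ) → Bool | ∀ v ∈ s, ω v = b v} =
          ⋂ v ∈ s, (fun ω : (ℤ × ℕ) → Bool => ω v) ⁻¹' {b v} := by
        ext ω; simp
      rw [this]
      exact MeasurableSet.biInter s.countable_toSet fun v _ =>
        (measurable_pi_apply v) (measurableSet_singleton (b v))
  have hpi : IsPiSystem C := by
    rintro S ⟨s, b, rfl⟩ T ⟨s', b', rfl⟩ hne
    obtain ⟨ω₀, hω₀⟩ := hne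
    simp only [Set.mem_inter_iff, Set.mem_setOf_eq] at hω₀
    refine ⟨s ∪ s', fun v => if v ∈ s then b v else b' v, ?_⟩
    ext ω
    simp only [Set.mem_inter_iff, Set.mem_setOf_eq, Finset.mem_union]
    constructor
    · rintro ⟨h1, h2⟩ v hv
      by_cases hvs : v ∈ s
      · simp [hvs, h1 v hvs]
      · simp [hvs, h2 v (hv.resolve_left hvs)]
    · intro h
      constructor
      · intro v hv
        have := h v (Or.inl hv)
        rwa [if_pos hv] at this
      · intro v hv
        have := h v (Or.inr hv)
        by_cases hvs : v ∈ s
        · rw [if_pos hvs] at this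
          rw [this, ← hω₀.1 v hvs, hω₀.2 v hv]
        · rwa [if_neg hvs] at this
  refine MeasureTheory.ext_of_generate_finite C hgen hpi ?_ ?_
  · rintro S ⟨s, b, rfl⟩
    rw [hP2 s b, hP'2 s b]
  · simp [measure_univ]

/-- For every `α ∈ [0,1]` and every `t ≥ 0`, the configuration at time
`t` of the Stavskaya process with parameter `α` started from the all-ones configuration
has the same law as the indicator configuration of existence of open percolation paths,
built from an i.i.d. Bernoulli field with success probability `1 - α`. -/
theorem stavskaya_eq_percolation (α : ℝ) (hα0 : 0 ≤ α) (hα1 : α ≤ 1) (t : ℕ)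
    (P P' : Measure ((ℤ × ℕ) → Bool))
    (hP : IsBernoulliNoise α P) (hP' : IsBernoulliNoise α P') :
    stavLaw P t = P'.map (percConfig t) := by
  have hPP' : P = P' := bernoulli_unique α hP hP'
  have hfun : stavState t = percConfig t := funext (stavState_eq t)
  show P.map (stavState t) = P'.map (percConfig t)
  rw [hfun, hPP']

end
end

section
/- For every α ∈ [0,1], all reals p > 1 and q ≥ 1, every integer m ≥ 1, and every t ≥ 0, the probability under δ₁ Stav^t that the components at positions 1, …, m are all 0 is at most p^{−2m} · Σ_{n=1}^∞ (S_1(n) + S_2(n) + S_3(n)), where the right-hand side is interpreted as an element of [0, ∞]. -/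
open MeasureTheory Filter

noncomputable section

/-- Displacements of the three step types: type 1 ↦ (−1,−1), type 2 ↦ (2,0),
type 3 ↦ (−1,1).  Type `r` (`r ∈ {1,2,3}`) is encoded as `(r - 1 : Fin 3)`. -/
def stepDisp : Fin 3 → ℤ × ℤ := ![(-1, -1), (2, 0), (-1, 1)]

/-- The endpoint of the path (started at the origin) with steps `w`. -/
def endpointOf {n : ℕ} (w : Fin n → Fin 3) : ℤ × ℤ := ∑ s, stepDisp (w s)

/-- A path is *nice* when its sequence of types contains no consecutive factor
`13`, `31`, `123` or `321` (types 1,2,3 are encoded as `0,1,2 : Fin 3`). -/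
def NicePath {n : ℕ} (w : Fin n → Fin 3) : Prop :=
  ∀ k : ℕ,
    (∀ h : k + 1 < n,
      ¬(w ⟨k, by omega⟩ = 0 ∧ w ⟨k + 1, h⟩ = 2) ∧
      ¬(w ⟨k, by omega⟩ = 2 ∧ w ⟨k + 1, h⟩ = 0)) ∧
    (∀ h : k + 2 < n,
      ¬(w ⟨k, by omega⟩ = 0 ∧ w ⟨k + 1, by omega⟩ = 1 ∧ w ⟨k + 2, h⟩ = 2) ∧
      ¬(w ⟨k, by omega⟩ = 2 ∧ w ⟨k + 1, by omega⟩ = 1 ∧ w ⟨k + 2, h⟩ = 0))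

/-- The weight of a path: `α ^ (number of type-2 steps)`. -/
def pathWeight (α : ℝ) {n : ℕ} (w : Fin n → Fin 3) : ℝ :=
  α ^ (Finset.univ.filter fun s => w s = 1).card

open Classical in
/-- `Spath α i t n r` is `S_r(i,t,n)`: the sum of weights of all nice paths of length `n`
ending at `(i, t)` whose last step has type `r` (type `r+1` in the 1,2,3 numbering). -/
def Spath (α : ℝ) (i t : ℤ) (n : ℕ) (r : Fin 3) : ℝ :=
  ∑ w ∈ Finset.univ.filter
      (fun w : Fin n → Fin 3 =>
        NicePath w ∧ endpointOf w = (i, t) ∧ ∀ h : n - 1 < n, w ⟨n - 1, h⟩ = r),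
    pathWeight α w

/-- `Sgen α p q r n` is `S_r(n) = Σ_{i,t ∈ ℤ} p^i q^t S_r(i,t,n)` (a finite sum, since
only finitely many pairs `(i,t)` carry a nice path of length `n`). -/
def Sgen (α p q : ℝ) (r : Fin 3) (n : ℕ) : ℝ :=
  ∑' (i : ℤ) (t : ℤ), p ^ i * q ^ t * Spath α i t n r

/-!
On the event that sites `1, …, m` are dead at time `t`, tracing the block `[1, m]` back in time
through the sites whose noise is `true` gives a region of sites forced to be dead; it is empty at
time `0`. A deterministic walk from `(0, t)` along the right boundary of this region (down below
a site with `true` noise, right across a killed site, up where the region ends) comes back to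
level `t` at a column `y ≥ m`. Placing the state `(j, s)` at `(2j + s, s)`, its moves are steps
of types 1, 2, 3, the way the region spreads rules out the factors 13, 31, 123, 321, the path
ends at `(2y, 0)`, and its type-2 steps cross distinct killed sites. A union bound over such
paths bounds the probability by the sum of their weights `α^k`, and `p^i q^τ ≥ p^(2m)` at every
endpoint `(i, τ)` with `i ≥ 2m`, `τ ≥ 0`.
-/

namespace Stavskaya

open Finset

lemma card_filter_lt_lt_of_mem {α : Type*} [LinearOrder α] {S : Finset α} {j k x : α}
    (hx : x ∈ S) (hjx : j < x) (hxk : x ≤ k) : #{c ∈ S | k < c} < #{c ∈ S | j < c} := by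
  refine card_lt_card ((ssubset_iff_of_subset fun c => ?_).2 ⟨x, ?_, ?_⟩)
  · simp only [mem_filter]
    exact fun h => ⟨h.1, by order⟩
  · simp [hx, hjx]
  · simp [hxk]

def move (X : ℤ × ℕ) : Fin 3 → ℤ × ℕ
  | 0 => (X.1, X.2 - 1)
  | 1 => (X.1 + 1, X.2)
  | 2 => (X.1 - 1, X.2 + 1)

def planePoint (X : ℤ × ℕ) : ℤ × ℤ := (2 * X.1 + X.2, X.2)

def killSites : ℤ × ℕ → List (Fin 3) → List (ℤ × ℕ)
  | _, [] => []
  | X, a :: l => if a = 1 then move X 1 :: killSites (move X 1) l else killSites (move X a) l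

def visited : ℤ × ℕ → List (Fin 3) → List (ℤ × ℕ)
  | X, [] => [X]
  | X, a :: l => X :: visited (move X a) l

def listEndpoint (l : List (Fin 3)) : ℤ × ℤ := (l.map stepDisp).sum

def NiceList (l : List (Fin 3)) : Prop :=
  ¬[0, 2] <:+: l ∧ ¬[2, 0] <:+: l ∧ ¬[0, 1, 2] <:+: l ∧ ¬[2, 1, 0] <:+: l

def IsGoodWord (m t : ℕ) (l : List (Fin 3)) : Prop :=
  NiceList l ∧ 2 * (m : ℤ) ≤ (listEndpoint l).1 ∧ 0 ≤ (listEndpoint l).2 ∧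
    (killSites (0, t) l).Nodup

lemma length_killSites (X : ℤ × ℕ) (l : List (Fin 3)) :
    (killSites X l).length = l.count 1 := by
  induction l generalizing X with
  | nil => rfl
  | cons a l ih => by_cases h : a = 1 <;> simp [killSites, h, ih]

lemma killSites_sublist_tail_visited (X : ℤ × ℕ) (l : List (Fin 3)) :
    (killSites X l).Sublist (visited X l).tail := by
  induction l generalizing X with
  | nil => simp [killSites, visited]
  | cons a l ih =>
    have hvis : visited (move X a) l = move X a :: (visited (move X a) l).tail := by
      cases l <;> rfl
    by_cases h : a = 1
    · subst h
      simpa [killSites, visited, ← hvis] using (ih (move X 1)).cons_cons (move X 1)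
    · simpa [killSites, visited, h] using (ih (move X a)).trans (List.tail_sublist _)

lemma stepDisp_eq_sub (X : ℤ × ℕ) (a : Fin 3) (h : a = 0 → 1 ≤ X.2) :
    stepDisp a = planePoint (move X a) - planePoint X := by
  fin_cases a <;> simp [stepDisp, move, planePoint] at h ⊢ <;> omega

section DeadRegion

variable (ω : (ℤ × ℕ) → Bool) (m t : ℕ)

def spreadAlive (S : Finset ℤ) (s : ℕ) : Finset ℤ :=
  {c ∈ S | ω (c, s) = true}.biUnion fun c => {c, c + 1}

def deadAtDepth : ℕ → Finset ℤ
  | 0 => Icc 1 (m : ℤ)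
  | d + 1 => spreadAlive ω (deadAtDepth d) (t - d)

/-- Sites that must be dead at time `s` once the block `[1, m]` is dead at time `t`: a site
dead at time `s + 1` whose noise is `true` has both parents dead at time `s`. -/
def deadRegion (s : ℕ) : Finset ℤ := if s ≤ t then deadAtDepth ω m t (t - s) else ∅

def BlockDies : Prop := ∀ i : ℤ, 1 ≤ i → i ≤ (m : ℤ) → stavState t ω i = false

variable {ω m t}

lemma deadRegion_self : deadRegion ω m t t = Icc 1 (m : ℤ) := by
  simp [deadRegion, deadAtDepth]

lemma le_of_mem_deadRegion {s : ℕ} {c : ℤ} (hc : c ∈ deadRegion ω m t s) : s ≤ t := by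
  by_contra h
  simp [deadRegion, h] at hc

lemma mem_deadRegion_of_alive {s : ℕ} {c : ℤ} (hc : c ∈ deadRegion ω m t (s + 1))
    (hal : ω (c, s + 1) = true) : c ∈ deadRegion ω m t s ∧ c + 1 ∈ deadRegion ω m t s := by
  have hs := le_of_mem_deadRegion hc
  have hdepth : t - s = t - (s + 1) + 1 := by omega
  have hlevel : t - (t - (s + 1)) = s + 1 := by omega
  simp only [deadRegion, hs, (Nat.le_succ s).trans hs, if_true, hdepth, deadAtDepth, hlevel]
    at hc ⊢
  constructor <;> exact mem_biUnion.2 ⟨c, mem_filter.2 ⟨hc, hal⟩, by simp⟩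

lemma stavState_eq_false_of_mem_deadAtDepth (hev : BlockDies ω m t) {d : ℕ} (hd : d ≤ t)
    {c : ℤ} (hc : c ∈ deadAtDepth ω m t d) : stavState (t - d) ω c = false := by
  induction d generalizing c with
  | zero =>
    rw [deadAtDepth, mem_Icc] at hc
    exact hev c hc.1 hc.2
  | succ d ih =>
    obtain ⟨c', hc', hmem⟩ := mem_biUnion.1 hc
    rw [mem_filter] at hc'
    have hdead := ih (by omega) hc'.1
    have hstep : t - d = t - (d + 1) + 1 := by omega
    rw [hstep, stavState, ← hstep, hc'.2, Bool.and_true, Bool.or_eq_false_iff] at hdead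
    simp only [mem_insert, mem_singleton] at hmem
    rcases hmem with rfl | rfl
    exacts [hdead.1, hdead.2]

lemma stavState_eq_false_of_mem_deadRegion (hev : BlockDies ω m t) {s : ℕ} {c : ℤ}
    (hc : c ∈ deadRegion ω m t s) : stavState s ω c = false := by
  have hs := le_of_mem_deadRegion hc
  simp only [deadRegion, hs, if_true] at hc
  simpa [Nat.sub_sub_self hs] using stavState_eq_false_of_mem_deadAtDepth hev (Nat.sub_le t s) hc

/-- The region is empty at time `0`, where every site is alive, so at time `1` it has no site
with `true` noise either. -/
lemma two_le_of_alive_mem_deadRegion (hev : BlockDies ω m t) {s : ℕ} {c : ℤ}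
    (hc : c ∈ deadRegion ω m t s) (hal : ω (c, s) = true) : 2 ≤ s := by
  have not_mem_zero : ∀ c, c ∉ deadRegion ω m t 0 := fun c hc => by
    simpa [stavState] using stavState_eq_false_of_mem_deadRegion hev hc
  match s, hc, hal with
  | 0, hc, _ => exact absurd hc (not_mem_zero c)
  | 1, hc, hal => exact absurd (mem_deadRegion_of_alive hc hal).1 (not_mem_zero c)
  | _ + 2, _, _ => omega

lemma mem_deadRegion_sub_one (hev : BlockDies ω m t) {s : ℕ} {c : ℤ}
    (hc : c ∈ deadRegion ω m t s) (hal : ω (c, s) = true) :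
    c ∈ deadRegion ω m t (s - 1) ∧ c + 1 ∈ deadRegion ω m t (s - 1) := by
  obtain ⟨s, rfl⟩ : ∃ s', s = s' + 1 :=
    ⟨s - 1, by have := two_le_of_alive_mem_deadRegion hev hc hal; omega⟩
  exact mem_deadRegion_of_alive hc hal

end DeadRegion

section BoundaryWalk

variable (ω : (ℤ × ℕ) → Bool) (m t : ℕ)

def boundaryStep (X : ℤ × ℕ) : Option (Fin 3 × (ℤ × ℕ)) :=
  if X.1 + 1 ∈ deadRegion ω m t X.2 then
    if ω (X.1 + 1, X.2) = true then some (0, move X 0) else some (1, move X 1)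
  else if X.2 < t then some (2, move X 2) else none

inductive BoundaryRun : ℤ × ℕ → List (Fin 3) → ℤ × ℕ → Prop
  | nil (X : ℤ × ℕ) : BoundaryRun X [] X
  | cons {X : ℤ × ℕ} {a : Fin 3} {Y : ℤ × ℕ} {l : List (Fin 3)} {Z : ℤ × ℕ} :
      boundaryStep ω m t X = some (a, Y) → BoundaryRun Y l Z → BoundaryRun X (a :: l) Z

variable {ω m t} {X Y Z : ℤ × ℕ} {a : Fin 3} {l : List (Fin 3)}

lemma eq_move_of_boundaryStep (h : boundaryStep ω m t X = some (a, Y)) : Y = move X a := by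
  unfold boundaryStep at h
  split_ifs at h <;> obtain ⟨⟨⟩, ⟨⟩⟩ := h <;> rfl

lemma boundaryStep_eq_some_zero (h : boundaryStep ω m t X = some (0, Y)) :
    X.1 + 1 ∈ deadRegion ω m t X.2 ∧ ω (X.1 + 1, X.2) = true ∧ Y = (X.1, X.2 - 1) := by
  unfold boundaryStep at h
  split_ifs at h <;> simp_all [move]

lemma boundaryStep_eq_some_one (h : boundaryStep ω m t X = some (1, Y)) :
    X.1 + 1 ∈ deadRegion ω m t X.2 ∧ ω (X.1 + 1, X.2) = false ∧ Y = (X.1 + 1, X.2) := by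
  unfold boundaryStep at h
  split_ifs at h <;> simp_all [move]

lemma boundaryStep_eq_some_two (h : boundaryStep ω m t X = some (2, Y)) :
    X.1 + 1 ∉ deadRegion ω m t X.2 ∧ X.2 < t ∧ Y = (X.1 - 1, X.2 + 1) := by
  unfold boundaryStep at h
  split_ifs at h <;> simp_all [move]

lemma BoundaryRun.append {l₁ l₂ : List (Fin 3)} (h₁ : BoundaryRun ω m t X l₁ Y)
    (h₂ : BoundaryRun ω m t Y l₂ Z) : BoundaryRun ω m t X (l₁ ++ l₂) Z := by
  induction h₁ with
  | nil => exact h₂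
  | cons hs _ ih => exact .cons hs (ih h₂)

lemma BoundaryRun.exists_of_append {l₁ l₂ : List (Fin 3)}
    (h : BoundaryRun ω m t X (l₁ ++ l₂) Z) : ∃ Y, BoundaryRun ω m t Y l₂ Z := by
  induction l₁ generalizing X with
  | nil => exact ⟨X, h⟩
  | cons a l₁ ih =>
    cases h with
    | cons _ h => exact ih h

lemma BoundaryRun.eq_of_halts {l' : List (Fin 3)} {Z' : ℤ × ℕ} (h : BoundaryRun ω m t X l Z)
    (h' : BoundaryRun ω m t X l' Z') (hZ : boundaryStep ω m t Z = none)
    (hZ' : boundaryStep ω m t Z' = none) : l = l' ∧ Z = Z' := by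
  induction h generalizing l' with
  | nil =>
    cases h' with
    | nil => exact ⟨rfl, rfl⟩
    | cons hs _ => simp_all
  | cons hs _ ih =>
    cases h' with
    | nil => simp_all
    | cons hs' h' =>
      rw [hs] at hs'
      obtain ⟨rfl, rfl⟩ := Prod.mk.inj (Option.some.inj hs')
      obtain ⟨rfl, rfl⟩ := ih h' hZ
      exact ⟨rfl, rfl⟩

lemma BoundaryRun.exists_of_mem_visited (h : BoundaryRun ω m t Y l Z) (hX : X ∈ visited Y l) :
    ∃ l', BoundaryRun ω m t X l' Z ∧ l'.length ≤ l.length := by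
  induction h with
  | nil =>
    obtain rfl : X = _ := by simpa [visited] using hX
    exact ⟨[], .nil _, le_rfl⟩
  | cons hs hr ih =>
    rw [visited, ← eq_move_of_boundaryStep hs] at hX
    rcases List.mem_cons.1 hX with rfl | hX
    · exact ⟨_, .cons hs hr, le_rfl⟩
    · obtain ⟨l', h', hlen⟩ := ih hX
      exact ⟨l', h', hlen.trans (Nat.le_succ _)⟩

/-- The walk is deterministic, so a state visited twice by a halting run would start two
halting runs of different lengths. -/
lemma BoundaryRun.nodup_visited (h : BoundaryRun ω m t X l Z) (hZ : boundaryStep ω m t Z = none) :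
    (visited X l).Nodup := by
  induction h with
  | nil => simp [visited]
  | cons hs hr ih =>
    rw [visited, ← eq_move_of_boundaryStep hs]
    refine List.nodup_cons.2 ⟨fun hX => ?_, ih hZ⟩
    obtain ⟨l', h', hlen⟩ := hr.exists_of_mem_visited hX
    obtain ⟨rfl, -⟩ := h'.eq_of_halts (.cons hs hr) hZ hZ
    simp at hlen

lemma BoundaryRun.nodup_killSites (h : BoundaryRun ω m t X l Z)
    (hZ : boundaryStep ω m t Z = none) : (killSites X l).Nodup :=
  ((killSites_sublist_tail_visited X l).trans (List.tail_sublist _)).nodup (h.nodup_visited hZ)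

lemma BoundaryRun.killSites_false (h : BoundaryRun ω m t X l Z) :
    ∀ v ∈ killSites X l, ω v = false := by
  induction h with
  | nil => simp [killSites]
  | @cons X a Y l Z hs _ ih =>
    rw [eq_move_of_boundaryStep hs] at ih
    by_cases ha : a = 1
    · subst ha
      obtain ⟨-, hkill, -⟩ := boundaryStep_eq_some_one hs
      simpa [killSites, move, hkill] using ih
    · simpa [killSites, ha] using ih

lemma BoundaryRun.listEndpoint_eq (hev : BlockDies ω m t) (h : BoundaryRun ω m t X l Z) :
    listEndpoint l = planePoint Z - planePoint X := by
  induction h with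
  | nil => simp [listEndpoint]
  | @cons X a Y l Z hs _ ih =>
    have hlevel : a = 0 → 1 ≤ X.2 := by
      rintro rfl
      obtain ⟨hmem, hal, -⟩ := boundaryStep_eq_some_zero hs
      have := two_le_of_alive_mem_deadRegion hev hmem hal
      omega
    rw [listEndpoint, List.map_cons, List.sum_cons, ← listEndpoint, ih,
      eq_move_of_boundaryStep hs, stepDisp_eq_sub X a hlevel]
    abel

lemma BoundaryRun.not_down_up (hev : BlockDies ω m t) :
    ¬BoundaryRun ω m t X ([0, 2] ++ l) Z := by
  rintro (_ | ⟨h₁, _ | ⟨h₂, -⟩⟩)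
  obtain ⟨hmem, hal, rfl⟩ := boundaryStep_eq_some_zero h₁
  exact (boundaryStep_eq_some_two h₂).1 (mem_deadRegion_sub_one hev hmem hal).1

lemma BoundaryRun.not_up_down : ¬BoundaryRun ω m t X ([2, 0] ++ l) Z := by
  rintro (_ | ⟨h₁, _ | ⟨h₂, -⟩⟩)
  obtain ⟨hout, -, rfl⟩ := boundaryStep_eq_some_two h₁
  obtain ⟨hmem, hal, -⟩ := boundaryStep_eq_some_zero h₂
  simp only [sub_add_cancel] at hmem hal
  exact hout (mem_deadRegion_of_alive hmem hal).2

lemma BoundaryRun.not_down_cross_up (hev : BlockDies ω m t) :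
    ¬BoundaryRun ω m t X ([0, 1, 2] ++ l) Z := by
  rintro (_ | ⟨h₁, _ | ⟨h₂, _ | ⟨h₃, -⟩⟩⟩)
  obtain ⟨hmem, hal, rfl⟩ := boundaryStep_eq_some_zero h₁
  obtain ⟨-, -, rfl⟩ := boundaryStep_eq_some_one h₂
  exact (boundaryStep_eq_some_two h₃).1 (mem_deadRegion_sub_one hev hmem hal).2

lemma BoundaryRun.not_up_cross_down : ¬BoundaryRun ω m t X ([2, 1, 0] ++ l) Z := by
  rintro (_ | ⟨h₁, _ | ⟨h₂, _ | ⟨h₃, -⟩⟩⟩)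
  obtain ⟨hout, -, rfl⟩ := boundaryStep_eq_some_two h₁
  obtain ⟨-, -, rfl⟩ := boundaryStep_eq_some_one h₂
  obtain ⟨hmem, hal, -⟩ := boundaryStep_eq_some_zero h₃
  simp only [sub_add_cancel] at hmem hal
  exact hout (mem_deadRegion_of_alive hmem hal).1

lemma BoundaryRun.niceList (hev : BlockDies ω m t) (h : BoundaryRun ω m t X l Z) :
    NiceList l := by
  have avoid : ∀ f : List (Fin 3), (∀ X' l' Z', ¬BoundaryRun ω m t X' (f ++ l') Z') →
      ¬f <:+: l := by
    rintro f hf ⟨l₁, l₂, rfl⟩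
    rw [List.append_assoc] at h
    obtain ⟨Y, hY⟩ := h.exists_of_append
    exact hf _ _ _ hY
  exact ⟨avoid _ fun _ _ _ => not_down_up hev, avoid _ fun _ _ _ => not_up_down,
    avoid _ fun _ _ _ => not_down_cross_up hev, avoid _ fun _ _ _ => not_up_cross_down⟩

variable (ω m t) in
/-- `LevelTraversal s j w y`: started at `(j, s)`, the boundary walk spells `w` and then leaves
level `s` upwards, or halts, from `(y, s)`. -/
inductive LevelTraversal : ℕ → ℤ → List (Fin 3) → ℤ → Prop
  | done {s : ℕ} {j : ℤ} : j + 1 ∉ deadRegion ω m t s → LevelTraversal s j [] j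
  | cross {s : ℕ} {j y : ℤ} {w : List (Fin 3)} :
      j + 1 ∈ deadRegion ω m t s → ω (j + 1, s) = false →
      LevelTraversal s (j + 1) w y → LevelTraversal s j (1 :: w) y
  | descend {s : ℕ} {j y₁ y : ℤ} {w₁ w₂ : List (Fin 3)} :
      j + 1 ∈ deadRegion ω m t (s + 1) → ω (j + 1, s + 1) = true →
      LevelTraversal s j w₁ y₁ → LevelTraversal (s + 1) (y₁ - 1) w₂ y →
      LevelTraversal (s + 1) j (0 :: w₁ ++ 2 :: w₂) y

lemma add_two_le_of_descend {s : ℕ} {j y₁ : ℤ} (hmem : j + 1 ∈ deadRegion ω m t (s + 1))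
    (hal : ω (j + 1, s + 1) = true) (hle : j ≤ y₁) (hexit : y₁ + 1 ∉ deadRegion ω m t s) :
    j + 2 ≤ y₁ := by
  obtain ⟨h₁, h₂⟩ := mem_deadRegion_of_alive hmem hal
  have : y₁ ≠ j := by rintro rfl; exact hexit h₁
  have : y₁ ≠ j + 1 := by rintro rfl; exact hexit h₂
  omega

lemma LevelTraversal.le_and_not_mem {s : ℕ} {j y : ℤ} {w : List (Fin 3)}
    (h : LevelTraversal ω m t s j w y) : j ≤ y ∧ y + 1 ∉ deadRegion ω m t s := by
  induction h with
  | done hout => exact ⟨le_rfl, hout⟩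
  | cross _ _ _ ih => exact ⟨by omega, ih.2⟩
  | descend hmem hal _ _ ih₁ ih₂ =>
    have := add_two_le_of_descend hmem hal ih₁.1 ih₁.2
    exact ⟨by omega, ih₂.2⟩

/-- Termination: across a level the walk moves right through the finitely many sites of
the region, and each descent is a traversal of the level below. -/
lemma exists_levelTraversal (hev : BlockDies ω m t) (s : ℕ) (j : ℤ) :
    ∃ w y, LevelTraversal ω m t s j w y := by
  induction s using Nat.strong_induction_on generalizing j with
  | _ s ihs =>
  induction hN : #{c ∈ deadRegion ω m t s | j < c} using Nat.strong_induction_on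
    generalizing j with
  | _ N ihN =>
  by_cases hmem : j + 1 ∈ deadRegion ω m t s
  swap
  · exact ⟨[], j, .done hmem⟩
  cases hal : ω (j + 1, s)
  · obtain ⟨w, y, h⟩ :=
      ihN _ (hN ▸ card_filter_lt_lt_of_mem hmem (by omega) le_rfl) (j + 1) rfl
    exact ⟨_, y, .cross hmem hal h⟩
  · obtain ⟨s, rfl⟩ : ∃ s', s = s' + 1 :=
      ⟨s - 1, by have := two_le_of_alive_mem_deadRegion hev hmem hal; omega⟩
    obtain ⟨w₁, y₁, h₁⟩ := ihs s (by omega) j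
    have := add_two_le_of_descend hmem hal h₁.le_and_not_mem.1 h₁.le_and_not_mem.2
    obtain ⟨w₂, y, h₂⟩ :=
      ihN _ (hN ▸ card_filter_lt_lt_of_mem hmem (by omega) (by omega)) (y₁ - 1) rfl
    exact ⟨_, y, .descend hmem hal h₁ h₂⟩

lemma LevelTraversal.boundaryRun {s : ℕ} {j y : ℤ} {w : List (Fin 3)}
    (h : LevelTraversal ω m t s j w y) : BoundaryRun ω m t (j, s) w (y, s) := by
  induction h with
  | done => exact .nil _
  | cross hmem hkill _ ih => exact .cons (by simp [boundaryStep, hmem, hkill, move]) ih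
  | @descend s j y₁ y w₁ w₂ hmem hal h₁ _ ih₁ ih₂ =>
    have hlt : s < t := le_of_mem_deadRegion hmem
    have hup : boundaryStep ω m t (y₁, s) = some (2, (y₁ - 1, s + 1)) := by
      simp [boundaryStep, h₁.le_and_not_mem.2, hlt, move]
    exact .cons (by simp [boundaryStep, hmem, hal, move]) (ih₁.append (.cons hup ih₂))

theorem exists_goodWord_of_blockDies (hev : BlockDies ω m t) :
    ∃ l, IsGoodWord m t l ∧ ∀ v ∈ killSites (0, t) l, ω v = false := by
  obtain ⟨w, y, h⟩ := exists_levelTraversal hev t 0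
  obtain ⟨hy, hexit⟩ := h.le_and_not_mem
  have hmy : (m : ℤ) ≤ y := by
    by_contra! hlt
    exact hexit (by rw [deadRegion_self, mem_Icc]; omega)
  have hrun := h.boundaryRun
  have hhalt : boundaryStep ω m t (y, t) = none := by simp [boundaryStep, hexit]
  have hend := hrun.listEndpoint_eq hev
  simp only [planePoint, Prod.mk_sub_mk] at hend
  exact ⟨w, ⟨hrun.niceList hev, by rw [hend]; omega, by rw [hend]; omega,
    hrun.nodup_killSites hhalt⟩, hrun.killSites_false⟩

end BoundaryWalk

lemma listEndpoint_ofFn {n : ℕ} (w : Fin n → Fin 3) :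
    listEndpoint (List.ofFn w) = endpointOf w := by
  simp [listEndpoint, endpointOf, List.map_ofFn, List.sum_ofFn]

lemma count_ofFn {n : ℕ} (w : Fin n → Fin 3) (r : Fin 3) :
    (List.ofFn w).count r = #{s | w s = r} := by
  rw [← Multiset.coe_count, ← Fin.univ_val_map, Multiset.count_map, card_def, filter_val]
  simp only [eq_comm]

lemma pair_infix_ofFn {α : Type*} {n k : ℕ} (w : Fin n → α) (hk : k + 1 < n) :
    [w ⟨k, by omega⟩, w ⟨k + 1, hk⟩] <:+: List.ofFn w :=
  List.infix_iff_getElem?.2 ⟨k, by simp; omega, fun i hi => by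
    simp only [List.length_cons, List.length_nil] at hi
    interval_cases i <;> simp [add_comm] <;> omega⟩

lemma triple_infix_ofFn {α : Type*} {n k : ℕ} (w : Fin n → α) (hk : k + 2 < n) :
    [w ⟨k, by omega⟩, w ⟨k + 1, by omega⟩, w ⟨k + 2, hk⟩] <:+: List.ofFn w :=
  List.infix_iff_getElem?.2 ⟨k, by simp; omega, fun i hi => by
    simp only [List.length_cons, List.length_nil] at hi
    interval_cases i <;> simp [add_comm] <;> omega⟩

lemma NiceList.nicePath {n : ℕ} {w : Fin n → Fin 3} (h : NiceList (List.ofFn w)) :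
    NicePath w := by
  obtain ⟨h02, h20, h012, h210⟩ := h
  refine fun k => ⟨fun hk => ⟨?_, ?_⟩, fun hk => ⟨?_, ?_⟩⟩
  · rintro ⟨h₀, h₁⟩
    exact h02 (h₀ ▸ h₁ ▸ pair_infix_ofFn w hk)
  · rintro ⟨h₀, h₁⟩
    exact h20 (h₀ ▸ h₁ ▸ pair_infix_ofFn w hk)
  · rintro ⟨h₀, h₁, h₂⟩
    exact h012 (h₀ ▸ h₁ ▸ h₂ ▸ triple_infix_ofFn w hk)
  · rintro ⟨h₀, h₁, h₂⟩
    exact h210 (h₀ ▸ h₁ ▸ h₂ ▸ triple_infix_ofFn w hk)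

open Classical in
def goodKillEvent (m t : ℕ) {n : ℕ} (w : Fin n → Fin 3) : Set ((ℤ × ℕ) → Bool) :=
  if IsGoodWord m t (List.ofFn w) then {ω | ∀ v ∈ killSites (0, t) (List.ofFn w), ω v = false}
  else ∅

open Classical in
lemma measure_goodKillEvent {α : ℝ} (hα0 : 0 ≤ α) {P : Measure ((ℤ × ℕ) → Bool)}
    (hP : IsBernoulliNoise α P) (m t : ℕ) {n : ℕ} (w : Fin n → Fin 3) :
    P (goodKillEvent m t w) =
      if IsGoodWord m t (List.ofFn w) then ENNReal.ofReal (pathWeight α w) else 0 := by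
  unfold goodKillEvent
  split_ifs with hgood
  · have hindep := hP.2 (killSites (0, t) (List.ofFn w)).toFinset fun _ => false
    simp only [List.mem_toFinset, Bool.false_eq_true, if_false, prod_const] at hindep
    rw [hindep, List.toFinset_card_of_nodup hgood.2.2.2, length_killSites, count_ofFn,
      ← ENNReal.ofReal_pow hα0, pathWeight]
  · exact measure_empty

lemma setOf_blockDies_subset {m : ℕ} (hm : 1 ≤ m) (t : ℕ) :
    {ω | BlockDies ω m t} ⊆
      ⋃ σ : Σ n : ℕ, Fin (n + 1) → Fin 3, goodKillEvent m t σ.2 := by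
  intro ω hev
  obtain ⟨l, hgood, hkill⟩ := exists_goodWord_of_blockDies hev
  obtain ⟨n, hn⟩ : ∃ n, l.length = n + 1 := by
    refine Nat.exists_eq_succ_of_ne_zero fun hl => ?_
    have := hgood.2.1
    simp [List.length_eq_zero_iff.1 hl, listEndpoint] at this
    omega
  have hofFn : List.ofFn (fun k : Fin (n + 1) => l[(k : ℕ)]) = l :=
    List.ext_getElem (by simp [hn]) fun _ _ _ => List.getElem_ofFn ..
  refine Set.mem_iUnion.2 ⟨⟨n, fun k => l[(k : ℕ)]⟩, ?_⟩
  rw [goodKillEvent, hofFn, if_pos hgood]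
  exact hkill

lemma measurable_stavState (t : ℕ) : Measurable (stavState t) := by
  refine measurable_pi_lambda _ fun i => ?_
  induction t generalizing i with
  | zero => exact measurable_const
  | succ t ih =>
    have hupdate : Measurable fun b : (Bool × Bool) × Bool => (b.1.1 || b.1.2) && b.2 :=
      .of_discrete
    exact hupdate.comp (((ih i).prodMk (ih (i + 1))).prodMk (measurable_pi_apply _))

lemma stavLaw_apply_deadBlock (P : Measure ((ℤ × ℕ) → Bool)) (m t : ℕ) :
    stavLaw P t {x : ℤ → Bool | ∀ i : ℤ, 1 ≤ i → i ≤ (m : ℤ) → x i = false} =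
      P {ω | BlockDies ω m t} :=
  Measure.map_apply (measurable_stavState t) (by measurability)

open Classical in
lemma Sgen_succ_eq_sum (α p q : ℝ) (r : Fin 3) (n : ℕ) :
    Sgen α p q r (n + 1) = ∑ w : Fin (n + 1) → Fin 3 with NicePath w ∧ w (Fin.last n) = r,
      p ^ (endpointOf w).1 * q ^ (endpointOf w).2 * pathWeight α w := by
  -- conditions nested so that `tsum_ite_eq` collapses the sum over `τ`, then over `i`
  have hterm : ∀ i τ : ℤ, p ^ i * q ^ τ * Spath α i τ (n + 1) r =
      ∑ w : Fin (n + 1) → Fin 3,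
        if τ = (endpointOf w).2 then
          (if i = (endpointOf w).1 then
            (if NicePath w ∧ w (Fin.last n) = r then
              p ^ (endpointOf w).1 * q ^ (endpointOf w).2 * pathWeight α w else 0)
          else 0)
        else 0 := by
    intro i τ
    rw [Spath, sum_filter, mul_sum]
    refine sum_congr rfl fun w _ => ?_
    have hlast : (∀ h : n + 1 - 1 < n + 1, w ⟨n + 1 - 1, h⟩ = r) ↔ w (Fin.last n) = r :=
      ⟨fun h => h n.lt_succ_self, fun h _ => h⟩
    simp only [hlast, Prod.ext_iff]
    split_ifs <;> simp_all
  have hsummable : ∀ (c : ℤ) (x : ℝ), Summable fun b : ℤ => if b = c then x else 0 :=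
    fun c x => (hasSum_ite_eq c x).summable
  simp only [Sgen, hterm]
  rw [tsum_congr fun i => Summable.tsum_finsetSum fun w _ => hsummable _ _]
  simp only [tsum_ite_eq]
  rw [Summable.tsum_finsetSum fun w _ => hsummable _ _]
  simp only [tsum_ite_eq, sum_filter]

lemma pathWeight_nonneg {α : ℝ} (hα0 : 0 ≤ α) {n : ℕ} (w : Fin n → Fin 3) :
    0 ≤ pathWeight α w :=
  pow_nonneg hα0 _

lemma pathWeight_le_of_isGoodWord {α p q : ℝ} (hα0 : 0 ≤ α) (hp : 1 < p) (hq : 1 ≤ q)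
    {m t n : ℕ} {w : Fin n → Fin 3} (hgood : IsGoodWord m t (List.ofFn w)) :
    pathWeight α w ≤
      p ^ (-(2 * (m : ℤ))) * (p ^ (endpointOf w).1 * q ^ (endpointOf w).2 * pathWeight α w) := by
  obtain ⟨-, hi, hτ, -⟩ := hgood
  rw [listEndpoint_ofFn] at hi hτ
  have hp0 : p ≠ 0 := (zero_lt_one.trans hp).ne'
  have htilt : 1 ≤ p ^ ((endpointOf w).1 - 2 * (m : ℤ)) * q ^ (endpointOf w).2 :=
    one_le_mul_of_one_le_of_one_le (one_le_zpow₀ hp.le (by omega)) (one_le_zpow₀ hq hτ)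
  calc pathWeight α w
      ≤ p ^ ((endpointOf w).1 - 2 * (m : ℤ)) * q ^ (endpointOf w).2 * pathWeight α w :=
        le_mul_of_one_le_left (pathWeight_nonneg hα0 w) htilt
    _ = _ := by rw [sub_eq_neg_add, zpow_add₀ hp0]; ring

open Classical in
lemma sum_pathWeight_isGoodWord_le {α p q : ℝ} (hα0 : 0 ≤ α) (hp : 1 < p) (hq : 1 ≤ q)
    (m t n : ℕ) :
    ∑ w : Fin (n + 1) → Fin 3 with IsGoodWord m t (List.ofFn w), pathWeight α w ≤
      p ^ (-(2 * (m : ℤ))) *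
        (Sgen α p q 0 (n + 1) + Sgen α p q 1 (n + 1) + Sgen α p q 2 (n + 1)) := by
  set tilted := fun w : Fin (n + 1) → Fin 3 =>
    p ^ (endpointOf w).1 * q ^ (endpointOf w).2 * pathWeight α w
  have htilted : ∀ w, 0 ≤ tilted w := fun w => by
    have := pathWeight_nonneg hα0 w
    positivity
  calc ∑ w : Fin (n + 1) → Fin 3 with IsGoodWord m t (List.ofFn w), pathWeight α w
      ≤ ∑ w : Fin (n + 1) → Fin 3 with IsGoodWord m t (List.ofFn w),
          p ^ (-(2 * (m : ℤ))) * tilted w :=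
        sum_le_sum fun w hw => pathWeight_le_of_isGoodWord hα0 hp hq (mem_filter.1 hw).2
    _ ≤ p ^ (-(2 * (m : ℤ))) * ∑ w : Fin (n + 1) → Fin 3 with NicePath w, tilted w := by
        rw [← mul_sum]
        refine mul_le_mul_of_nonneg_left (sum_le_sum_of_subset_of_nonneg ?_ fun w _ _ => htilted w)
          (by positivity)
        exact monotone_filter_right _ fun _ _ hw => hw.1.nicePath
    _ = _ := by
        rw [Sgen_succ_eq_sum, Sgen_succ_eq_sum, Sgen_succ_eq_sum, ← Fin.sum_univ_three
          (f := fun r =>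
            ∑ w : Fin (n + 1) → Fin 3 with NicePath w ∧ w (Fin.last n) = r, tilted w)]
        simp only [← filter_filter]
        rw [sum_fiberwise]

lemma sum_measure_goodKillEvent_le {α p q : ℝ} (hα0 : 0 ≤ α) (hp : 1 < p) (hq : 1 ≤ q)
    {P : Measure ((ℤ × ℕ) → Bool)} (hP : IsBernoulliNoise α P) (m t n : ℕ) :
    ∑ w : Fin (n + 1) → Fin 3, P (goodKillEvent m t w) ≤
      ENNReal.ofReal (p ^ (-(2 * (m : ℤ)))) *
        ENNReal.ofReal (Sgen α p q 0 (n + 1) + Sgen α p q 1 (n + 1) + Sgen α p q 2 (n + 1)) := by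
  classical
  simp only [measure_goodKillEvent hα0 hP, ← sum_filter]
  rw [← ENNReal.ofReal_sum_of_nonneg fun w _ => pathWeight_nonneg hα0 w,
    ← ENNReal.ofReal_mul (by positivity)]
  exact ENNReal.ofReal_le_ofReal (sum_pathWeight_isGoodWord_le hα0 hp hq m t n)

end Stavskaya

theorem stavskaya_generating_bound_general (α : ℝ) (hα0 : 0 ≤ α)
    (p q : ℝ) (hp : 1 < p) (hq : 1 ≤ q)
    (P : Measure ((ℤ × ℕ) → Bool)) (hP : IsBernoulliNoise α P)
    (m : ℕ) (hm : 1 ≤ m) (t : ℕ) :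
    stavLaw P t {x : ℤ → Bool | ∀ i : ℤ, 1 ≤ i → i ≤ (m : ℤ) → x i = false} ≤
      ENNReal.ofReal (p ^ (-(2 * (m : ℤ)))) *
        ∑' n : ℕ, ENNReal.ofReal (Sgen α p q 0 (n + 1) + Sgen α p q 1 (n + 1) +
          Sgen α p q 2 (n + 1)) := by
  open Stavskaya in
  rw [stavLaw_apply_deadBlock, ← ENNReal.tsum_mul_left]
  calc P {ω | BlockDies ω m t}
      ≤ P (⋃ σ : Σ n : ℕ, Fin (n + 1) → Fin 3, goodKillEvent m t σ.2) :=
        measure_mono (setOf_blockDies_subset hm t)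
    _ ≤ ∑' σ : Σ n : ℕ, Fin (n + 1) → Fin 3, P (goodKillEvent m t σ.2) :=
        measure_iUnion_le _
    _ = ∑' n : ℕ, ∑ w : Fin (n + 1) → Fin 3, P (goodKillEvent m t w) := by
        simp only [ENNReal.tsum_sigma', tsum_fintype]
    _ ≤ _ := ENNReal.tsum_le_tsum fun n => sum_measure_goodKillEvent_le hα0 hp hq hP m t n

/-- For every `α ∈ [0,1]`, all reals `p > 1` and `q ≥ 1`, every integer
`m ≥ 1` and every `t ≥ 0`, the probability under `δ₁ Stav^t` that the components at
positions `1, …, m` are all `0` is at most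
`p^{−2m} · Σ_{n=1}^∞ (S_1(n) + S_2(n) + S_3(n))`, interpreted in `[0, ∞]`. -/
theorem stavskaya_generating_bound (α : ℝ) (hα0 : 0 ≤ α) (hα1 : α ≤ 1)
    (p q : ℝ) (hp : 1 < p) (hq : 1 ≤ q)
    (P : Measure ((ℤ × ℕ) → Bool)) (hP : IsBernoulliNoise α P)
    (m : ℕ) (hm : 1 ≤ m) (t : ℕ) :
    stavLaw P t {x : ℤ → Bool | ∀ i : ℤ, 1 ≤ i → i ≤ (m : ℤ) → x i = false} ≤
      ENNReal.ofReal (p ^ (-(2 * (m : ℤ)))) *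
        ∑' n : ℕ, ENNReal.ofReal (Sgen α p q 0 (n + 1) + Sgen α p q 1 (n + 1) +
          Sgen α p q 2 (n + 1)) :=
  stavskaya_generating_bound_general α hα0 p q hp hq P hP m hm t
end
end

section
/- For every α ∈ (0,1), with p = (1+√5)/2 and q = 1, the Perron–Frobenius eigenvalue (spectral radius) of the nonnegative matrix M(α,p,q) equals λ(α) := (1/4)(2α√5 + 3α²√5 + 7α² + 4α + 3 − √5) + (1/4)√(f(α)), where f(α) := 14 + 28α²√5 + 72α² + 94α⁴ + 4α√5 + 4α − 6√5 + 172α³ + 76α³√5 + 42α⁴√5. -/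
noncomputable section

/-- The matrix `M(α, p, q)` of the recurrence `S(n+2) = S(n) · M`. -/
def Mmat (α p q : ℝ) : Matrix (Fin 3) (Fin 3) ℝ :=
  !![p ^ (-2 : ℤ) * q ^ (-2 : ℤ) + α * q⁻¹, α * p * q⁻¹ + α ^ 2 * p ^ 4, 0;
     p ^ (-2 : ℤ) * q ^ (-2 : ℤ) + α * q⁻¹, α * p * q⁻¹ + α ^ 2 * p ^ 4 + α * p * q,
       α * q + p ^ (-2 : ℤ) * q ^ 2;
     0, α ^ 2 * p ^ 4 + α * p * q, α * q + p ^ (-2 : ℤ) * q ^ 2]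

/-- The polynomial `f(α)` appearing under the square root in the formula for the
Perron–Frobenius eigenvalue. -/
def fpoly (α : ℝ) : ℝ :=
  14 + 28 * α ^ 2 * Real.sqrt 5 + 72 * α ^ 2 + 94 * α ^ 4 + 4 * α * Real.sqrt 5 + 4 * α -
    6 * Real.sqrt 5 + 172 * α ^ 3 + 76 * α ^ 3 * Real.sqrt 5 + 42 * α ^ 4 * Real.sqrt 5

/-- `λ(α) = (1/4)(2α√5 + 3α²√5 + 7α² + 4α + 3 − √5) + (1/4)√(f(α))`. -/
def lam (α : ℝ) : ℝ :=
  (1 / 4) * (2 * α * Real.sqrt 5 + 3 * α ^ 2 * Real.sqrt 5 + 7 * α ^ 2 + 4 * α + 3 -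
    Real.sqrt 5) + (1 / 4) * Real.sqrt (fpoly α)

/-! With `q = 1` the matrix has the shape `!![a, b, 0; a, b + d, a; 0, b, a]`, where
`a = p⁻² + α`, `b = α p + α² p⁴`, `d = α p`. The vector `(1, 0, -1)` is an eigenvector for `a`,
and the characteristic polynomial factors as `(X - a) (X² - (a + b + d) X + a (d - b))`. For
`a, b, d ≥ 0` the quadratic has real roots, and its larger root dominates `a` and the absolute
value of the smaller root, so it is the spectral radius. At `p = φ`, using `φ² = φ + 1`, one finds
`4 λ(α) = 2 (a + b + d) + √f(α)` with `f(α) = 4 ((a + b + d)² + 4 a (b - d))`, so this root is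
`λ(α)`. -/

theorem Matrix.spectrum_eq_range_of_det_eq_prod {K ι κ : Type*} [Field K] [Fintype ι]
    [DecidableEq ι] [Fintype κ] (A : Matrix ι ι K) (r : κ → K)
    (h : ∀ μ, (algebraMap K (Matrix ι ι K) μ - A).det = ∏ i, (μ - r i)) :
    spectrum K A = Set.range r := by
  ext μ
  rw [spectrum.mem_iff, Matrix.isUnit_iff_isUnit_det, isUnit_iff_ne_zero, not_not, h,
    Finset.prod_eq_zero_iff]
  simp [sub_eq_zero, eq_comm]

theorem spectralRadius_eq_of_spectrum_eq_range {A κ : Type*} [Ring A] [Algebra ℂ A] {a : A}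
    {r : κ → ℝ} (h : spectrum ℂ a = Set.range (fun i ↦ (r i : ℂ))) (i₀ : κ)
    (hmax : ∀ i, |r i| ≤ r i₀) : spectralRadius ℂ a = ENNReal.ofReal (r i₀) := by
  rw [spectralRadius, h, iSup_range]
  refine le_antisymm (iSup_le fun i ↦ ?_) (le_iSup_of_le i₀ ?_)
  · simpa [← enorm_eq_nnnorm, Real.enorm_eq_ofReal_abs] using ENNReal.ofReal_le_ofReal (hmax i)
  · simp [← enorm_eq_nnnorm, Real.enorm_eq_ofReal_abs, le_abs_self]

def tridiagMat (a b d : ℝ) : Matrix (Fin 3) (Fin 3) ℝ := !![a, b, 0; a, b + d, a; 0, b, a]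

/-- The larger root of the quadratic factor `X ^ 2 - (a + b + d) X + a (d - b)` of the
characteristic polynomial of `tridiagMat a b d`. -/
def perronRoot (a b d : ℝ) : ℝ := (a + b + d + √((a + b + d) ^ 2 + 4 * a * (b - d))) / 2

section TridiagMat

variable {a b d : ℝ}

theorem det_algebraMap_sub_tridiagMat (μ : ℂ) :
    (algebraMap ℂ _ μ - (tridiagMat a b d).map (Complex.ofReal ·)).det =
      (μ - a) * (μ ^ 2 - (a + b + d) * μ + a * (d - b)) := by
  simp [tridiagMat, Matrix.det_fin_three, Matrix.algebraMap_matrix_apply]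
  ring

theorem tridiagMat_discr_nonneg (ha : 0 ≤ a) (hb : 0 ≤ b) (hd : 0 ≤ d) :
    0 ≤ (a + b + d) ^ 2 + 4 * a * (b - d) := by
  nlinarith [sq_nonneg (a - d), mul_nonneg ha hb, mul_nonneg hb (add_nonneg ha hd)]

theorem det_algebraMap_sub_tridiagMat_eq_prod (ha : 0 ≤ a) (hb : 0 ≤ b) (hd : 0 ≤ d) (μ : ℂ) :
    (algebraMap ℂ _ μ - (tridiagMat a b d).map (Complex.ofReal ·)).det =
      ∏ i, (μ - ((![a, perronRoot a b d,
        (a + b + d - √((a + b + d) ^ 2 + 4 * a * (b - d))) / 2] i : ℝ) : ℂ)) := by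
  have hsq : ((√((a + b + d) ^ 2 + 4 * a * (b - d)) : ℝ) : ℂ) ^ 2 =
      (a + b + d) ^ 2 + 4 * a * (b - d) := by
    exact_mod_cast Real.sq_sqrt (tridiagMat_discr_nonneg ha hb hd)
  rw [det_algebraMap_sub_tridiagMat, Fin.prod_univ_three]
  simp only [Matrix.cons_val, perronRoot]
  push_cast
  linear_combination (μ - a) / 4 * hsq

theorem spectralRadius_tridiagMat (ha : 0 ≤ a) (hb : 0 ≤ b) (hd : 0 ≤ d) :
    spectralRadius ℂ ((tridiagMat a b d).map (Complex.ofReal ·)) =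
      ENNReal.ofReal (perronRoot a b d) := by
  refine spectralRadius_eq_of_spectrum_eq_range (Matrix.spectrum_eq_range_of_det_eq_prod _ _
    (det_algebraMap_sub_tridiagMat_eq_prod ha hb hd)) 1 fun i ↦ ?_
  have hsqrt := Real.sqrt_nonneg ((a + b + d) ^ 2 + 4 * a * (b - d))
  fin_cases i <;> simp only [Fin.zero_eta, Fin.mk_one, Fin.reduceFinMk, Matrix.cons_val,
    perronRoot]
  · -- `(a + b + d) ^ 2 + 4 * a * (b - d) = (a - b - d) ^ 2 + 8 * a * b`
    have : a - b - d ≤ √((a + b + d) ^ 2 + 4 * a * (b - d)) :=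
      (le_abs_self _).trans (Real.abs_le_sqrt (by nlinarith [mul_nonneg ha hb]))
    rw [abs_of_nonneg ha]
    linarith
  · exact (abs_of_nonneg (by positivity)).le
  · rw [abs_le]
    constructor <;> linarith

end TridiagMat

theorem Mmat_one_eq_tridiagMat (α p : ℝ) :
    Mmat α p 1 = tridiagMat (p ^ (-2 : ℤ) + α) (α * p + α ^ 2 * p ^ 4) (α * p) := by
  ext i j
  fin_cases i <;> fin_cases j <;> simp [Mmat, tridiagMat] <;> ring

open scoped goldenRatio

theorem Real.goldenRatio_zpow_neg_two : φ ^ (-2 : ℤ) = (3 - √5) / 2 := by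
  rw [zpow_neg, zpow_ofNat, ← inv_pow, Real.inv_goldenRatio, neg_sq, Real.goldenConj_sq]
  ring

theorem Real.goldenRatio_pow_four : φ ^ 4 = (7 + 3 * √5) / 2 := by
  rw [show φ ^ 4 = (φ ^ 2) ^ 2 by ring, Real.goldenRatio_sq]
  linear_combination (1 / 4 : ℝ) * Real.sq_sqrt (show (0 : ℝ) ≤ 5 by norm_num)

theorem lam_eq_perronRoot (α : ℝ) :
    lam α = perronRoot (φ ^ (-2 : ℤ) + α) (α * φ + α ^ 2 * φ ^ 4) (α * φ) := by
  rw [Real.goldenRatio_zpow_neg_two, Real.goldenRatio_pow_four, perronRoot]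
  set a := (3 - √5) / 2 + α
  set b := α * φ + α ^ 2 * ((7 + 3 * √5) / 2)
  set d := α * φ
  have hf : fpoly α = 2 ^ 2 * ((a + b + d) ^ 2 + 4 * a * (b - d)) := by
    simp only [fpoly, a, b, d, Real.goldenRatio]
    linear_combination (12 * α ^ 2 - (3 * α ^ 2 + 2 * α - 1) ^ 2) *
      Real.sq_sqrt (show (0 : ℝ) ≤ 5 by norm_num)
  rw [lam, hf, Real.sqrt_mul (by norm_num), Real.sqrt_sq (by norm_num)]
  simp only [a, b, d, Real.goldenRatio]
  ring

theorem spectralRadius_Mmat_general (α : ℝ) (hα0 : 0 < α) :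
    spectralRadius ℂ ((Mmat α ((1 + Real.sqrt 5) / 2) 1).map (Complex.ofReal ·)) =
      ENNReal.ofReal (lam α) := by
  have hφ := Real.goldenRatio_pos
  rw [Mmat_one_eq_tridiagMat, spectralRadius_tridiagMat (by positivity) (by positivity)
    (by positivity), lam_eq_perronRoot]

/-- For every `α ∈ (0,1)`, with `p = (1+√5)/2` and `q = 1`, the
Perron–Frobenius eigenvalue (spectral radius, i.e. the maximum of the absolute values of
the complex eigenvalues) of the nonnegative matrix `M(α,p,q)` equals `λ(α)`. -/
theorem spectralRadius_Mmat (α : ℝ) (hα0 : 0 < α) (hα1 : α < 1) :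
    spectralRadius ℂ ((Mmat α ((1 + Real.sqrt 5) / 2) 1).map (Complex.ofReal ·)) =
      ENNReal.ofReal (lam α) :=
  spectralRadius_Mmat_general α hα0

end
end

section
/- For every real α with 0 < α < 0.1142, the quantity λ(α) := (1/4)(2α√5 + 3α²√5 + 7α² + 4α + 3 − √5) + (1/4)√(f(α)) is strictly less than 1, where f(α) := 14 + 28α²√5 + 72α² + 94α⁴ + 4α√5 + 4α − 6√5 + 172α³ + 76α³√5 + 42α⁴√5. -/
noncomputable section

/-- For every real `α` with `0 < α < 0.1142`, `λ(α) < 1`. -/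
theorem lam_lt_one (α : ℝ) (hα0 : 0 < α) (hα1 : α < 0.1142) : lam α < 1 := by
  set s : ℝ := Real.sqrt 5 with hs_def
  have hs_sq : s ^ 2 = 5 := Real.sq_sqrt (by norm_num)
  have hs_pos : (0 : ℝ) < s := Real.sqrt_pos.mpr (by norm_num)
  have hs_lb : (2 : ℝ) < s := by
    nlinarith [hs_sq, hs_pos]
  have hs_ub : s < 2.2361 := by
    nlinarith [hs_sq, hs_pos]
  set g : ℝ := 2 * α * s + 3 * α ^ 2 * s + 7 * α ^ 2 + 4 * α + 3 - s with hg_def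
  -- A = 1 - 2α - 4α² - 3α³ > 0
  have hA : (0 : ℝ) < 1 - 2 * α - 4 * α ^ 2 - 3 * α ^ 3 := by nlinarith
  -- D = 5A² - B² > 0
  have hD : (0 : ℝ) < 4 - 28 * α - 56 * α ^ 2 - 44 * α ^ 3 - 16 * α ^ 4 - 20 * α ^ 5
      - 4 * α ^ 6 := by nlinarith [pow_pos hα0 2, pow_pos hα0 3, pow_pos hα0 4, pow_pos hα0 5, pow_pos hα0 6]
  have hB : (0 : ℝ) < 1 + 4 * α + 10 * α ^ 2 + 7 * α ^ 3 := by positivity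
  -- A·s > B
  have hAsB : 1 + 4 * α + 10 * α ^ 2 + 7 * α ^ 3
      < (1 - 2 * α - 4 * α ^ 2 - 3 * α ^ 3) * s := by
    nlinarith [mul_pos hA hs_pos, hs_sq, hD, hB, sq_nonneg ((1 - 2 * α - 4 * α ^ 2 - 3 * α ^ 3) * s - (1 + 4 * α + 10 * α ^ 2 + 7 * α ^ 3))]
  -- 4 - g > 0
  have hg4 : 0 < 4 - g := by
    rw [hg_def]
    nlinarith [hs_lb, hs_ub, sq_nonneg α]
  -- f < (4-g)²
  have hflt : fpoly α < (4 - g) ^ 2 := by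
    have : (4 - g) ^ 2 - fpoly α
        = 8 * ((1 - 2 * α - 4 * α ^ 2 - 3 * α ^ 3) * s - (1 + 4 * α + 10 * α ^ 2 + 7 * α ^ 3)) := by
      rw [hg_def, fpoly, ← hs_def]
      linear_combination (1 - 4*α - 2*α^2 + 12*α^3 + 9*α^4) * hs_sq
    nlinarith [hAsB]
  have hsqrt : Real.sqrt (fpoly α) < 4 - g := (Real.sqrt_lt' hg4).mpr hflt
  rw [lam, ← hs_def, ← hg_def]
  linarith
end
end

section
/- For every real α with 0 < α < 0.1142, with p = (1+√5)/2 and q = 1, the series Σ_{n=1}^∞ (S_1(n) + S_2(n) + S_3(n)) of weighted nice-path generating sums converges to a finite real number. -/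
noncomputable section

----------------------------------------------------------------
-- Auxiliary development
----------------------------------------------------------------

open Finset Classical

namespace SgenAux

/-- weight of a single word including the `p`-generating variable. -/
def gw (α p : ℝ) {n : ℕ} (w : Fin n → Fin 3) : ℝ :=
  pathWeight α w * p ^ ((endpointOf w).1)

/-- per-letter weight. -/
def swt (α p : ℝ) (c : Fin 3) : ℝ := (if c = 1 then α else 1) * p ^ ((stepDisp c).1)

/-- state value for words of length 1. -/
def U1 : Fin 3 → ℝ := fun x => if x = 1 then 1.8 else 1

/-- state value read off the first two letters. -/
def U2 : Fin 3 → Fin 3 → ℝ := fun x y =>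
  if x = 1 then (if y = 1 then 1.8 else 1.2) else 1

def uFun : ∀ {n : ℕ}, (Fin n → Fin 3) → ℝ
  | 0, _ => 1
  | 1, w => U1 (w 0)
  | (_ + 2), w => U2 (w 0) (w 1)

lemma fin3_cases (x : Fin 3) : x = 0 ∨ x = 1 ∨ x = 2 := by omega

lemma uFun_ge_one : ∀ {n : ℕ} (w : Fin n → Fin 3), (1:ℝ) ≤ uFun w
  | 0, _ => le_refl 1
  | 1, w => by
      rcases fin3_cases (w 0) with h | h | h <;> simp [uFun, U1, h] <;> norm_num
  | (_ + 2), w => by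
      rcases fin3_cases (w 0) with h | h | h <;>
      rcases fin3_cases (w 1) with h' | h' | h' <;>
      simp [uFun, U2, h, h'] <;> norm_num

lemma gw_nonneg {α p : ℝ} (hα : 0 ≤ α) (hp : 0 < p) {n : ℕ} (w : Fin n → Fin 3) :
    0 ≤ gw α p w := by
  have : (0:ℝ) ≤ pathWeight α w := pow_nonneg hα _
  exact mul_nonneg this (zpow_pos hp _).le

/-- cons at shifted index -/
lemma cons_at {n : ℕ} (c : Fin 3) (v : Fin n → Fin 3) (k : ℕ) (h : k + 1 < n + 1) :
    (Fin.cons c v : Fin (n+1) → Fin 3) ⟨k + 1, h⟩ = v ⟨k, by omega⟩ :=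
  Fin.cons_succ (α := fun _ => Fin 3) c v ⟨k, Nat.lt_of_succ_lt_succ h⟩

lemma nice_tail {n : ℕ} {c : Fin 3} {v : Fin n → Fin 3}
    (h : NicePath (Fin.cons c v)) : NicePath v := by
  intro k
  obtain ⟨h1, h2⟩ := h (k + 1)
  constructor
  · intro hk
    have := h1 (by omega)
    rwa [cons_at, cons_at] at this
  · intro hk
    have := h2 (by omega)
    rwa [cons_at, cons_at, cons_at] at this

lemma nice_head2 {n : ℕ} {c : Fin 3} {v : Fin n → Fin 3} (hn : 0 < n)
    (h : NicePath (Fin.cons c v)) :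
    ¬(c = 0 ∧ v ⟨0, hn⟩ = 2) ∧ ¬(c = 2 ∧ v ⟨0, hn⟩ = 0) := by
  have := (h 0).1 (by omega)
  rwa [show (⟨0, by omega⟩ : Fin (n+1)) = 0 from rfl, Fin.cons_zero, cons_at] at this

lemma nice_head3 {n : ℕ} {c : Fin 3} {v : Fin n → Fin 3} (hn : 1 < n)
    (h : NicePath (Fin.cons c v)) :
    ¬(c = 0 ∧ v ⟨0, by omega⟩ = 1 ∧ v ⟨1, hn⟩ = 2) ∧
    ¬(c = 2 ∧ v ⟨0, by omega⟩ = 1 ∧ v ⟨1, hn⟩ = 0) := by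
  have := (h 0).2 (by omega)
  rwa [show (⟨0, by omega⟩ : Fin (n+1)) = 0 from rfl, Fin.cons_zero, cons_at, cons_at] at this

lemma gw_cons (α p : ℝ) (hp : p ≠ 0) {n : ℕ} (c : Fin 3) (v : Fin n → Fin 3) :
    gw α p (Fin.cons c v) = swt α p c * gw α p v := by
  have hpw : pathWeight α (Fin.cons c v) = (if c = 1 then α else 1) * pathWeight α v := by
    unfold pathWeight
    rw [card_filter, card_filter, Fin.sum_univ_succ]
    simp only [Fin.cons_zero, Fin.cons_succ]
    rcases eq_or_ne c 1 with h | h <;> simp [h, pow_add]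
  have hep : endpointOf (Fin.cons c v) = stepDisp c + endpointOf v := by
    unfold endpointOf
    rw [Fin.sum_univ_succ]
    simp [Fin.cons_zero, Fin.cons_succ]
  unfold gw swt
  rw [hpw, hep]
  rw [Prod.fst_add, zpow_add₀ hp]
  ring


lemma ite_le {P : Prop} [Decidable P] {x : ℝ} (hx : 0 ≤ x) : (if P then x else 0) ≤ x := by
  split <;> simp [hx]

lemma uFun_one (v : Fin 1 → Fin 3) : uFun v = U1 (v 0) := rfl

lemma uFun_two {k : ℕ} (v : Fin (k + 2) → Fin 3) : uFun v = U2 (v 0) (v 1) := rfl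

lemma uFun_ne_one : ∀ {m : ℕ} (v : Fin (m + 1) → Fin 3), v 0 ≠ 1 → uFun v = 1
  | 0, v, h => by rw [uFun_one]; simp [U1, h]
  | (k+1), v, h => by rw [uFun_two]; simp [U2, h]

lemma uFun_cons {m : ℕ} (c : Fin 3) (v : Fin (m + 1) → Fin 3) :
    uFun (Fin.cons c v) = U2 c (v 0) := by
  rw [show uFun (Fin.cons c v) = U2 ((Fin.cons c v : Fin (m+2) → Fin 3) 0)
      ((Fin.cons c v : Fin (m+2) → Fin 3) 1) from rfl]
  have h1 : ((1 : Fin (m + 2))) = ⟨0 + 1, by omega⟩ := by ext; simp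
  rw [Fin.cons_zero, h1, cons_at]
  congr 1 <;> simp [Fin.ext_iff]

set_option maxHeartbeats 1600000 in
lemma step_bound (α p : ℝ) (hα0 : 0 < α) (hα1 : α < 0.1142)
    (hp : p = (1 + Real.sqrt 5) / 2) {m : ℕ} (v : Fin (m + 1) → Fin 3) :
    (∑ c : Fin 3, if NicePath (Fin.cons c v) then swt α p c * U2 c (v 0) else 0)
      ≤ 0.99 * uFun v := by
  set s := Real.sqrt 5 with hs
  have hs2 : s ^ 2 = 5 := Real.sq_sqrt (by norm_num)
  have hs0 : 0 ≤ s := Real.sqrt_nonneg 5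
  have hsl : 2.236 < s := by nlinarith
  have hsu : s < 2.23607 := by nlinarith
  have hp0 : 0 < p := by rw [hp]; nlinarith
  -- values of swt
  have hsw0 : swt α p 0 = p ^ (-1 : ℤ) := by
    simp [swt, stepDisp, show (0 : Fin 3) ≠ 1 by decide]
  have hsw2 : swt α p 2 = p ^ (-1 : ℤ) := by
    simp [swt, stepDisp, show (2 : Fin 3) ≠ 1 by decide]
  have hsw1 : swt α p 1 = α * p ^ (2 : ℤ) := by
    simp [swt, stepDisp]
  set A := p ^ (-1 : ℤ) with hA
  set B := α * p ^ (2 : ℤ) with hB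
  have hA0 : 0 < A := zpow_pos hp0 _
  have hAval : A = (s - 1) / 2 := by
    rw [hA, zpow_neg_one, eq_div_iff (by norm_num : (2:ℝ) ≠ 0), inv_mul_eq_div,
      div_eq_iff (ne_of_gt hp0), hp]
    nlinarith
  have hA2 : A ≤ 0.61804 := by rw [hAval]; nlinarith
  have hB0 : 0 < B := mul_pos hα0 (zpow_pos hp0 _)
  have hBval : B = α * ((3 + s) / 2) := by
    rw [hB, hp, zpow_two]
    linear_combination (α / 4) * hs2
  have hB2 : B ≤ 0.29899 := by rw [hBval]; nlinarith
  -- numeric inequalities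
  have nI : A + 1.2 * B ≤ 0.99 := by nlinarith
  have nII : A + 1.8 * B ≤ 0.99 * 1.2 := by nlinarith
  have nIII : A + A + 1.8 * B ≤ 0.99 * 1.8 := by nlinarith
  -- evaluate U2 at the second slot
  have hU20 : ∀ x, U2 0 x = 1 := fun x => by
    simp [U2, show (0 : Fin 3) ≠ 1 by decide]
  have hU22 : ∀ x, U2 2 x = 1 := fun x => by
    simp [U2, show (2 : Fin 3) ≠ 1 by decide]
  have hU210 : U2 1 0 = 1.2 := by simp [U2, show (0 : Fin 3) ≠ 1 by decide]
  have hU212 : U2 1 2 = 1.2 := by simp [U2, show (2 : Fin 3) ≠ 1 by decide]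
  have hU211 : U2 1 1 = 1.8 := by simp [U2]
  have e0 : v 0 = v ⟨0, by omega⟩ := by congr 1 <;> simp [Fin.ext_iff]
  rw [Fin.sum_univ_three, hsw0, hsw1, hsw2, hU20, hU22]
  rcases fin3_cases (v 0) with h0 | h0 | h0
  · -- v starts with letter "1"
    have t0 : (if NicePath (Fin.cons 0 v) then A * 1 else 0) ≤ A := by
      simpa using ite_le (by linarith : (0:ℝ) ≤ A * 1)
    have t1 : (if NicePath (Fin.cons 1 v) then B * U2 1 (v 0) else 0) ≤ 1.2 * B := by
      rw [h0, hU210]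
      calc (if NicePath (Fin.cons 1 v) then B * 1.2 else 0) ≤ B * 1.2 := ite_le (by linarith)
        _ = 1.2 * B := mul_comm _ _
    have t2 : (if NicePath (Fin.cons 2 v) then A * 1 else 0) = 0 := by
      rw [if_neg]
      intro hnice
      exact (nice_head2 (by omega) hnice).2 ⟨rfl, by rw [← e0, h0]⟩
    have huv : uFun v = 1 := uFun_ne_one v (by rw [h0]; decide)
    rw [huv]; linarith
  · -- v starts with letter "2"
    have t1 : (if NicePath (Fin.cons 1 v) then B * U2 1 (v 0) else 0) ≤ 1.8 * B := by
      rw [h0, hU211]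
      calc (if NicePath (Fin.cons 1 v) then B * 1.8 else 0) ≤ B * 1.8 := ite_le (by linarith)
        _ = 1.8 * B := mul_comm _ _
    obtain _ | k := m
    · have huv : uFun v = 1.8 := by rw [uFun_one, h0]; simp [U1]
      have t0 : (if NicePath (Fin.cons 0 v) then A * 1 else 0) ≤ A := by
        simpa using ite_le (by linarith : (0:ℝ) ≤ A * 1)
      have t2 : (if NicePath (Fin.cons 2 v) then A * 1 else 0) ≤ A := by
        simpa using ite_le (by linarith : (0:ℝ) ≤ A * 1)
      rw [huv]; linarith
    · have e1 : v 1 = v ⟨1, by omega⟩ := by congr 1 <;> simp [Fin.ext_iff]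
      have huv : uFun v = U2 1 (v 1) := by rw [uFun_two, h0]
      rcases fin3_cases (v 1) with h1 | h1 | h1
      · have t0 : (if NicePath (Fin.cons 0 v) then A * 1 else 0) ≤ A := by
          simpa using ite_le (by linarith : (0:ℝ) ≤ A * 1)
        have t2 : (if NicePath (Fin.cons 2 v) then A * 1 else 0) = 0 := by
          rw [if_neg]
          intro hnice
          exact (nice_head3 (by omega) hnice).2 ⟨rfl, by rw [← e0, h0], by rw [← e1, h1]⟩
        rw [huv, h1, hU210]; linarith
      · have t0 : (if NicePath (Fin.cons 0 v) then A * 1 else 0) ≤ A := by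
          simpa using ite_le (by linarith : (0:ℝ) ≤ A * 1)
        have t2 : (if NicePath (Fin.cons 2 v) then A * 1 else 0) ≤ A := by
          simpa using ite_le (by linarith : (0:ℝ) ≤ A * 1)
        rw [huv, h1, hU211]; linarith
      · have t0 : (if NicePath (Fin.cons 0 v) then A * 1 else 0) = 0 := by
          rw [if_neg]
          intro hnice
          exact (nice_head3 (by omega) hnice).1 ⟨rfl, by rw [← e0, h0], by rw [← e1, h1]⟩
        have t2 : (if NicePath (Fin.cons 2 v) then A * 1 else 0) ≤ A := by
          simpa using ite_le (by linarith : (0:ℝ) ≤ A * 1)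
        rw [huv, h1, hU212]; linarith
  · -- v starts with letter "3"
    have t2 : (if NicePath (Fin.cons 2 v) then A * 1 else 0) ≤ A := by
      simpa using ite_le (by linarith : (0:ℝ) ≤ A * 1)
    have t1 : (if NicePath (Fin.cons 1 v) then B * U2 1 (v 0) else 0) ≤ 1.2 * B := by
      rw [h0, hU212]
      calc (if NicePath (Fin.cons 1 v) then B * 1.2 else 0) ≤ B * 1.2 := ite_le (by linarith)
        _ = 1.2 * B := mul_comm _ _
    have t0 : (if NicePath (Fin.cons 0 v) then A * 1 else 0) = 0 := by
      rw [if_neg]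
      intro hnice
      exact (nice_head2 (by omega) hnice).1 ⟨rfl, by rw [← e0, h0]⟩
    have huv : uFun v = 1 := uFun_ne_one v (by rw [h0]; decide)
    rw [huv]; linarith

/-- total `u`-weighted sum over nice words of length `n`. -/
def G (α p : ℝ) (n : ℕ) : ℝ :=
  ∑ w : Fin n → Fin 3, (if NicePath w then gw α p w * uFun w else 0)

lemma swt_nonneg {α p : ℝ} (hα : 0 ≤ α) (hp : 0 < p) (c : Fin 3) : 0 ≤ swt α p c := by
  unfold swt
  have : (0:ℝ) ≤ (if c = 1 then α else 1) := by split <;> norm_num [hα]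
  exact mul_nonneg this (zpow_pos hp _).le

lemma U2_nonneg (c d : Fin 3) : 0 ≤ U2 c d := by
  unfold U2; split <;> [skip; norm_num] <;> split <;> norm_num

lemma G_step (α p : ℝ) (hα0 : 0 < α) (hα1 : α < 0.1142)
    (hp : p = (1 + Real.sqrt 5) / 2) (m : ℕ) :
    G α p (m + 2) ≤ 0.99 * G α p (m + 1) := by
  have hp0 : 0 < p := by
    rw [hp]; positivity
  unfold G
  rw [Fintype.sum_equiv (Fin.consEquiv (fun _ : Fin (m + 2) => Fin 3))
    (fun x => if NicePath (Fin.cons x.1 x.2) then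
        gw α p (Fin.cons x.1 x.2) * uFun (Fin.cons x.1 x.2) else 0)
    (fun w => if NicePath w then gw α p w * uFun w else 0)
    (fun x => rfl) |>.symm]
  rw [Fintype.sum_prod_type_right, Finset.mul_sum]
  apply Finset.sum_le_sum
  intro v _
  by_cases hv : NicePath v
  · have hterm : ∀ c : Fin 3,
        (if NicePath (Fin.cons c v) then gw α p (Fin.cons c v) * uFun (Fin.cons c v) else 0)
        = gw α p v * (if NicePath (Fin.cons c v) then swt α p c * U2 c (v 0) else 0) := by
      intro c
      rw [gw_cons α p (ne_of_gt hp0), uFun_cons]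
      split <;> ring
    calc (∑ c : Fin 3, if NicePath (Fin.cons c v) then
            gw α p (Fin.cons c v) * uFun (Fin.cons c v) else 0)
        = gw α p v * ∑ c : Fin 3,
            (if NicePath (Fin.cons c v) then swt α p c * U2 c (v 0) else 0) := by
          rw [Finset.mul_sum]; exact Finset.sum_congr rfl (fun c _ => hterm c)
      _ ≤ gw α p v * (0.99 * uFun v) := by
          apply mul_le_mul_of_nonneg_left (step_bound α p hα0 hα1 hp v)
            (gw_nonneg hα0.le hp0 v)
      _ = 0.99 * (if NicePath v then gw α p v * uFun v else 0) := by
          rw [if_pos hv]; ring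
  · have hterm : ∀ c : Fin 3,
        (if NicePath (Fin.cons c v) then gw α p (Fin.cons c v) * uFun (Fin.cons c v) else 0)
          = 0 := by
      intro c
      rw [if_neg (fun h => hv (nice_tail h))]
    rw [if_neg hv]
    simp [hterm]

lemma gw_single (α p : ℝ) (w : Fin 1 → Fin 3) : gw α p w = swt α p (w 0) := by
  unfold gw swt pathWeight endpointOf
  rw [Finset.card_filter, Fin.sum_univ_one, Fin.sum_univ_one]
  rcases eq_or_ne (w 0) 1 with h | h <;> simp [h]

lemma nice_single (w : Fin 1 → Fin 3) : NicePath w :=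
  fun k => ⟨fun h => absurd h (by omega), fun h => absurd h (by omega)⟩

lemma G_one (α p : ℝ) (hα0 : 0 < α) (hα1 : α < 0.1142)
    (hp : p = (1 + Real.sqrt 5) / 2) : G α p 1 ≤ 1.8 := by
  set s := Real.sqrt 5 with hs
  have hs2 : s ^ 2 = 5 := Real.sq_sqrt (by norm_num)
  have hs0 : 0 ≤ s := Real.sqrt_nonneg 5
  have hsl : 2.236 < s := by nlinarith
  have hsu : s < 2.23607 := by nlinarith
  have hp0 : 0 < p := by rw [hp]; nlinarith
  have hsw0 : swt α p 0 = p ^ (-1 : ℤ) := by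
    simp [swt, stepDisp, show (0 : Fin 3) ≠ 1 by decide]
  have hsw2 : swt α p 2 = p ^ (-1 : ℤ) := by
    simp [swt, stepDisp, show (2 : Fin 3) ≠ 1 by decide]
  have hsw1 : swt α p 1 = α * p ^ (2 : ℤ) := by
    simp [swt, stepDisp]
  set A := p ^ (-1 : ℤ) with hA
  set B := α * p ^ (2 : ℤ) with hB
  have hA0 : 0 < A := zpow_pos hp0 _
  have hAval : A = (s - 1) / 2 := by
    rw [hA, zpow_neg_one, eq_div_iff (by norm_num : (2:ℝ) ≠ 0), inv_mul_eq_div,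
      div_eq_iff (ne_of_gt hp0), hp]
    nlinarith
  have hA2 : A ≤ 0.61804 := by rw [hAval]; nlinarith
  have hB0 : 0 < B := mul_pos hα0 (zpow_pos hp0 _)
  have hBval : B = α * ((3 + s) / 2) := by
    rw [hB, hp, zpow_two]
    linear_combination (α / 4) * hs2
  have hB2 : B ≤ 0.29899 := by rw [hBval]; nlinarith
  unfold G
  rw [Fintype.sum_equiv (Equiv.funUnique (Fin 1) (Fin 3)).symm
    (fun c : Fin 3 => if NicePath (fun _ : Fin 1 => c) then
        gw α p (fun _ : Fin 1 => c) * uFun (fun _ : Fin 1 => c) else 0)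
    (fun w => if NicePath w then gw α p w * uFun w else 0)
    (fun c => rfl) |>.symm]
  have hval : ∀ c : Fin 3,
      (if NicePath (fun _ : Fin 1 => c) then
        gw α p (fun _ : Fin 1 => c) * uFun (fun _ : Fin 1 => c) else 0)
      = swt α p c * U1 c := by
    intro c
    rw [if_pos (nice_single _), gw_single, uFun_one]
  rw [Fin.sum_univ_three, hval, hval, hval, hsw0, hsw1, hsw2]
  have u0 : U1 0 = 1 := by simp [U1, show (0 : Fin 3) ≠ 1 by decide]
  have u2 : U1 2 = 1 := by simp [U1, show (2 : Fin 3) ≠ 1 by decide]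
  have u1 : U1 1 = 1.8 := by simp [U1]
  rw [u0, u1, u2]
  nlinarith

lemma G_bound (α p : ℝ) (hα0 : 0 < α) (hα1 : α < 0.1142)
    (hp : p = (1 + Real.sqrt 5) / 2) (n : ℕ) :
    G α p (n + 1) ≤ 1.8 * 0.99 ^ n := by
  induction n with
  | zero => simpa using G_one α p hα0 hα1 hp
  | succ k ih =>
      calc G α p (k + 2) ≤ 0.99 * G α p (k + 1) := G_step α p hα0 hα1 hp k
        _ ≤ 0.99 * (1.8 * 0.99 ^ k) := by linarith
        _ = 1.8 * 0.99 ^ (k + 1) := by ring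

lemma Sgen_eq (α p : ℝ) (n : ℕ) (r : Fin 3) :
    Sgen α p 1 r n =
      ∑ w ∈ Finset.univ.filter
        (fun w : Fin n → Fin 3 =>
          NicePath w ∧ ∀ h : n - 1 < n, w ⟨n - 1, h⟩ = r),
        gw α p w := by
  classical
  set I : Finset ℤ := Finset.image (fun w : Fin n → Fin 3 => (endpointOf w).1) Finset.univ
    with hI
  set T : Finset ℤ := Finset.image (fun w : Fin n → Fin 3 => (endpointOf w).2) Finset.univ
    with hT
  have hz : ∀ i t : ℤ, (i ∉ I ∨ t ∉ T) → Spath α i t n r = 0 := by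
    intro i t hit
    apply Finset.sum_eq_zero
    intro w hw
    rw [Finset.mem_filter] at hw
    obtain ⟨-, -, he, -⟩ := hw
    exfalso
    rcases hit with h | h
    · exact h (Finset.mem_image.2 ⟨w, Finset.mem_univ w, by rw [he]⟩)
    · exact h (Finset.mem_image.2 ⟨w, Finset.mem_univ w, by rw [he]⟩)
  unfold Sgen
  have h1 : ∀ i : ℤ, ∑' (t : ℤ), p ^ i * (1:ℝ) ^ t * Spath α i t n r
      = ∑ t ∈ T, p ^ i * (1:ℝ) ^ t * Spath α i t n r := by
    intro i
    exact tsum_eq_sum (fun t ht => by rw [hz i t (Or.inr ht)]; ring)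
  rw [tsum_congr h1,
    tsum_eq_sum (s := I) (fun i hi => Finset.sum_eq_zero
      (fun t _ => by rw [hz i t (Or.inl hi)]; ring))]
  simp only [one_zpow, mul_one]
  rw [← Finset.sum_product']
  have hmaps : ∀ w ∈ Finset.univ.filter
      (fun w : Fin n → Fin 3 =>
        NicePath w ∧ ∀ h : n - 1 < n, w ⟨n - 1, h⟩ = r),
      endpointOf w ∈ I ×ˢ T := by
    intro w _
    rw [Finset.mem_product]
    exact ⟨Finset.mem_image.2 ⟨w, Finset.mem_univ w, rfl⟩,
      Finset.mem_image.2 ⟨w, Finset.mem_univ w, rfl⟩⟩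
  rw [← Finset.sum_fiberwise_of_maps_to hmaps (gw α p)]
  apply Finset.sum_congr rfl
  rintro ⟨i, t⟩ -
  have hset : Finset.univ.filter
      (fun w : Fin n → Fin 3 =>
        NicePath w ∧ endpointOf w = (i, t) ∧ ∀ h : n - 1 < n, w ⟨n - 1, h⟩ = r)
      = (Finset.univ.filter
        (fun w : Fin n → Fin 3 =>
          NicePath w ∧ ∀ h : n - 1 < n, w ⟨n - 1, h⟩ = r)).filter
        (fun w => endpointOf w = (i, t)) := by
    ext w
    simp only [Finset.mem_filter, Finset.mem_univ, true_and]
    tauto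
  unfold Spath
  rw [Finset.mul_sum, hset]
  apply Finset.sum_congr rfl
  intro w hw
  rw [Finset.mem_filter] at hw
  unfold gw
  rw [hw.2]
  ring

lemma Sgen_le_G (α p : ℝ) (hα0 : 0 < α) (hp0 : 0 < p) (n : ℕ) (r : Fin 3) :
    Sgen α p 1 r n ≤ G α p n := by
  rw [Sgen_eq]
  calc (∑ w ∈ Finset.univ.filter
        (fun w : Fin n → Fin 3 =>
          NicePath w ∧ ∀ h : n - 1 < n, w ⟨n - 1, h⟩ = r), gw α p w)
      ≤ ∑ w ∈ Finset.univ.filter (fun w : Fin n → Fin 3 => NicePath w), gw α p w := by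
        apply Finset.sum_le_sum_of_subset_of_nonneg
        · intro w hw
          rw [Finset.mem_filter] at hw ⊢
          exact ⟨hw.1, hw.2.1⟩
        · intro w _ _
          exact gw_nonneg hα0.le hp0 w
    _ ≤ ∑ w ∈ Finset.univ.filter (fun w : Fin n → Fin 3 => NicePath w),
          gw α p w * uFun w := by
        apply Finset.sum_le_sum
        intro w _
        exact le_mul_of_one_le_right (gw_nonneg hα0.le hp0 w) (uFun_ge_one w)
    _ = G α p n := by
        rw [G, Finset.sum_filter]

lemma Sgen_nonneg (α p : ℝ) (hα0 : 0 < α) (hp0 : 0 < p) (n : ℕ) (r : Fin 3) :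
    0 ≤ Sgen α p 1 r n := by
  rw [Sgen_eq]
  exact Finset.sum_nonneg (fun w _ => gw_nonneg hα0.le hp0 w)

end SgenAux

/-- For every real `α` with `0 < α < 0.1142`, with `p = (1+√5)/2` and
`q = 1`, the series `Σ_{n=1}^∞ (S_1(n) + S_2(n) + S_3(n))` of weighted nice-path
generating sums converges to a finite real number. -/
theorem Sgen_series_summable (α : ℝ) (hα0 : 0 < α) (hα1 : α < 0.1142) :
    Summable (fun n : ℕ =>
      Sgen α ((1 + Real.sqrt 5) / 2) 1 0 (n + 1) +
      Sgen α ((1 + Real.sqrt 5) / 2) 1 1 (n + 1) +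
      Sgen α ((1 + Real.sqrt 5) / 2) 1 2 (n + 1)) := by
  open SgenAux in
  have hp : ((1 + Real.sqrt 5) / 2 : ℝ) = (1 + Real.sqrt 5) / 2 := rfl
  have hp0 : (0:ℝ) < (1 + Real.sqrt 5) / 2 := by positivity
  refine Summable.of_nonneg_of_le (f := fun n : ℕ => (5.4:ℝ) * 0.99 ^ n) ?_ ?_ ?_
  · intro n
    have h0 := SgenAux.Sgen_nonneg α _ hα0 hp0 (n + 1) 0
    have h1 := SgenAux.Sgen_nonneg α _ hα0 hp0 (n + 1) 1
    have h2 := SgenAux.Sgen_nonneg α _ hα0 hp0 (n + 1) 2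
    linarith
  · intro n
    have hG := SgenAux.G_bound α _ hα0 hα1 rfl n
    have h0 := SgenAux.Sgen_le_G α _ hα0 hp0 (n + 1) 0
    have h1 := SgenAux.Sgen_le_G α _ hα0 hp0 (n + 1) 1
    have h2 := SgenAux.Sgen_le_G α _ hα0 hp0 (n + 1) 2
    show _ ≤ (5.4:ℝ) * 0.99 ^ n
    nlinarith
  · exact (summable_geometric_of_lt_one (by norm_num) (by norm_num)).mul_left 5.4

end
end
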